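/- (Monotonicity in ε and convergence of optimal values.) Let V(ε) denote the optimal value of the ε-multi-marginal problem inf_{π ∈ Π(σ,μ,ν)} ∬ c_ε dπ dπ with c_ε = ε(d_X−d_Y)² + (d_S−d_X)² + (d_S−d_Y)². Then ε ↦ V(ε) is nondecreasing, and V(ε) → GW(S,X)² + GW(S,Y)² as ε → 0⁺. -/

import Mathlib

open MeasureTheory Filter Topology

/-- The Gromov–Wasserstein cost of a plan `π` on `X × Y`. -/
noncomputable def gwCost {X Y : Type*} [PseudoMetricSpace X] [PseudoMetricSpace Y]
    [MeasurableSpace X] [MeasurableSpace Y] (π : Measure (X × Y)) : ℝ :=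
  ∫ p, ∫ q, (dist p.1 q.1 - dist p.2 q.2) ^ 2 ∂π ∂π

/-- `π` is a coupling of `μ` and `ν`. -/
def IsCoupling {X Y : Type*} [MeasurableSpace X] [MeasurableSpace Y]
    (π : Measure (X × Y)) (μ : Measure X) (ν : Measure Y) : Prop :=
  π.map Prod.fst = μ ∧ π.map Prod.snd = ν

/-- The squared Gromov–Wasserstein distance. -/
noncomputable def gwSq {X Y : Type*} [PseudoMetricSpace X] [PseudoMetricSpace Y]
    [MeasurableSpace X] [MeasurableSpace Y] (μ : Measure X) (ν : Measure Y) : ℝ :=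
  sInf {c | ∃ π : Measure (X × Y), IsCoupling π μ ν ∧ c = gwCost π}

/-- `π` is an optimal Gromov–Wasserstein plan between `μ` and `ν`. -/
def IsOptGW {X Y : Type*} [PseudoMetricSpace X] [PseudoMetricSpace Y]
    [MeasurableSpace X] [MeasurableSpace Y]
    (π : Measure (X × Y)) (μ : Measure X) (ν : Measure Y) : Prop :=
  IsCoupling π μ ν ∧ gwCost π = gwSq μ ν

/-- The LGW objective of a three-plan on `S × X × Y`:
`∬ |d_X(x,x') − d_Y(y,y')|² dπ dπ`. -/
noncomputable def lgwCost {S X Y : Type*} [PseudoMetricSpace X] [PseudoMetricSpace Y]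
    [MeasurableSpace S] [MeasurableSpace X] [MeasurableSpace Y]
    (π : Measure (S × X × Y)) : ℝ :=
  ∫ p, ∫ q, (dist p.2.1 q.2.1 - dist p.2.2 q.2.2) ^ 2 ∂π ∂π

/-- The linear Gromov–Wasserstein value with reference `(S, σ)`:
infimum of the LGW objective over three-plans whose `(S,X)`- and `(S,Y)`-marginals
are optimal GW plans. -/
noncomputable def lgw {S X Y : Type*} [PseudoMetricSpace S] [PseudoMetricSpace X]
    [PseudoMetricSpace Y] [MeasurableSpace S] [MeasurableSpace X] [MeasurableSpace Y]
    (σ : Measure S) (μ : Measure X) (ν : Measure Y) : ℝ :=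
  sInf {c | ∃ π : Measure (S × X × Y),
    IsOptGW (π.map (fun p => (p.1, p.2.1))) σ μ ∧
    IsOptGW (π.map (fun p => (p.1, p.2.2))) σ ν ∧
    c = lgwCost π}

/-- The cost `c_ε` on `(S × X × Y)²`. -/
noncomputable def cEps {S X Y : Type*} [PseudoMetricSpace S] [PseudoMetricSpace X]
    [PseudoMetricSpace Y] (ε : ℝ) (p q : S × X × Y) : ℝ :=
  ε * (dist p.2.1 q.2.1 - dist p.2.2 q.2.2) ^ 2
    + (dist p.1 q.1 - dist p.2.1 q.2.1) ^ 2
    + (dist p.1 q.1 - dist p.2.2 q.2.2) ^ 2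

/-- The quadratic functional `π ↦ ∬ c_ε dπ dπ` of the ε-multi-marginal GW problem. -/
noncomputable def mgwEps {S X Y : Type*} [PseudoMetricSpace S] [PseudoMetricSpace X]
    [PseudoMetricSpace Y] [MeasurableSpace S] [MeasurableSpace X] [MeasurableSpace Y]
    (ε : ℝ) (π : Measure (S × X × Y)) : ℝ :=
  ∫ p, ∫ q, cEps ε p q ∂π ∂π

/-- `π ∈ Π(σ, μ, ν)`: three-marginal coupling. -/
def IsTripleCoupling {S X Y : Type*} [MeasurableSpace S] [MeasurableSpace X]
    [MeasurableSpace Y] (π : Measure (S × X × Y))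
    (σ : Measure S) (μ : Measure X) (ν : Measure Y) : Prop :=
  π.map Prod.fst = σ ∧ π.map (fun p => p.2.1) = μ ∧ π.map (fun p => p.2.2) = ν

/-- The optimal value `V(ε)` of the ε-multi-marginal problem. -/
noncomputable def mgwVal {S X Y : Type*} [PseudoMetricSpace S] [PseudoMetricSpace X]
    [PseudoMetricSpace Y] [MeasurableSpace S] [MeasurableSpace X] [MeasurableSpace Y]
    (σ : Measure S) (μ : Measure X) (ν : Measure Y) (ε : ℝ) : ℝ :=
  sInf {c | ∃ π : Measure (S × X × Y), IsTripleCoupling π σ μ ν ∧ c = mgwEps ε π}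

/-! A three-plan `π` with two-marginals `π_SX`, `π_SY` has
`mgwEps ε π = ε · lgwCost π + gwCost π_SX + gwCost π_SY`, where `0 ≤ lgwCost π ≤ diam X² + diam Y²`.
This gives monotonicity in `ε` and the lower bound `GW(S,X)² + GW(S,Y)² ≤ V(ε)`. Conversely, gluing
near-optimal plans for `(σ, μ)` and `(σ, ν)` along their common marginal `σ` (by disintegration)
yields three-plans showing `V(ε) ≤ GW(S,X)² + GW(S,Y)² + ε (diam X² + diam Y²)`, and the limit
follows by squeezing. -/

open ProbabilityTheory

section DoubleIntegral

variable {α β E : Type*} [MeasurableSpace α] [MeasurableSpace β]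
  [NormedAddCommGroup E] [NormedSpace ℝ E]

theorem integral_integral_map (μ : Measure α) [SFinite μ] {T : α → β} (hT : Measurable T)
    {g : β → β → E} (hg : StronglyMeasurable (Function.uncurry g)) :
    ∫ x, ∫ y, g x y ∂μ.map T ∂μ.map T = ∫ a, ∫ b, g (T a) (T b) ∂μ ∂μ := by
  rw [integral_map hT.aemeasurable hg.integral_prod_right.aestronglyMeasurable]
  refine integral_congr_ae (ae_of_all _ fun a => ?_)
  exact integral_map hT.aemeasurable
    (hg.comp_measurable measurable_prodMk_left).aestronglyMeasurable

theorem integral_integral_add_uncurry {μ : Measure α} {ν : Measure β} [SFinite μ] [SFinite ν]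
    {f g : α → β → E} (hf : Integrable (Function.uncurry f) (μ.prod ν))
    (hg : Integrable (Function.uncurry g) (μ.prod ν)) :
    ∫ x, ∫ y, f x y + g x y ∂ν ∂μ = (∫ x, ∫ y, f x y ∂ν ∂μ) + ∫ x, ∫ y, g x y ∂ν ∂μ :=
  integral_integral_add hf hg

end DoubleIntegral

section Coupling

variable {S X Y : Type*} [MeasurableSpace S] [MeasurableSpace X] [MeasurableSpace Y]
  {σ : Measure S} {μ : Measure X} {ν : Measure Y}

theorem isCoupling_prod [IsProbabilityMeasure μ] [IsProbabilityMeasure ν] :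
    IsCoupling (μ.prod ν) μ ν :=
  ⟨Measure.fst_prod, Measure.snd_prod⟩

theorem isTripleCoupling_prod [IsProbabilityMeasure σ] [IsProbabilityMeasure μ]
    [IsProbabilityMeasure ν] : IsTripleCoupling (σ.prod (μ.prod ν)) σ μ ν := by
  refine ⟨Measure.fst_prod, ?_, ?_⟩
  · exact (Measure.map_map measurable_fst measurable_snd).symm.trans
      (by rw [← Measure.snd, Measure.snd_prod, ← Measure.fst, Measure.fst_prod])
  · exact (Measure.map_map measurable_snd measurable_snd).symm.trans
      (by rw [← Measure.snd, ← Measure.snd, Measure.snd_prod, Measure.snd_prod])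

theorem IsCoupling.isProbabilityMeasure [IsProbabilityMeasure μ] {π : Measure (X × Y)}
    (h : IsCoupling π μ ν) : IsProbabilityMeasure π :=
  have : IsProbabilityMeasure (π.map Prod.fst) := h.1 ▸ ‹_›
  Measure.isProbabilityMeasure_of_map Prod.fst

theorem IsTripleCoupling.isProbabilityMeasure [IsProbabilityMeasure σ]
    {π : Measure (S × X × Y)} (h : IsTripleCoupling π σ μ ν) : IsProbabilityMeasure π :=
  have : IsProbabilityMeasure (π.map Prod.fst) := h.1 ▸ ‹_›
  Measure.isProbabilityMeasure_of_map Prod.fst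

theorem isTripleCoupling_iff {π : Measure (S × X × Y)} :
    IsTripleCoupling π σ μ ν ↔ IsCoupling (π.map fun p => (p.1, p.2.1)) σ μ ∧
      IsCoupling (π.map fun p => (p.1, p.2.2)) σ ν := by
  have hSX : Measurable fun p : S × X × Y => (p.1, p.2.1) := by fun_prop
  have hSY : Measurable fun p : S × X × Y => (p.1, p.2.2) := by fun_prop
  simp only [IsTripleCoupling, IsCoupling, Measure.map_map measurable_fst hSX,
    Measure.map_map measurable_fst hSY, Measure.map_map measurable_snd hSX,
    Measure.map_map measurable_snd hSY, Function.comp_def]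
  tauto

theorem exists_map_eq_of_fst_eq [StandardBorelSpace X] [Nonempty X] [StandardBorelSpace Y]
    [Nonempty Y] (π₁ : Measure (S × X)) (π₂ : Measure (S × Y)) [IsFiniteMeasure π₁]
    [IsFiniteMeasure π₂] (h : π₁.fst = π₂.fst) :
    ∃ π : Measure (S × X × Y),
      π.map (fun p => (p.1, p.2.1)) = π₁ ∧ π.map (fun p => (p.1, p.2.2)) = π₂ := by
  refine ⟨π₁.fst ⊗ₘ (π₁.condKernel ×ₖ π₂.condKernel), ?_, ?_⟩
  · change Measure.map (Prod.map id Prod.fst) _ = _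
    rw [← Measure.compProd_map measurable_fst, ← Kernel.fst_eq, Kernel.fst_prod,
      Measure.disintegrate]
  · change Measure.map (Prod.map id Prod.snd) _ = _
    rw [← Measure.compProd_map measurable_snd, ← Kernel.snd_eq, Kernel.snd_prod, h,
      Measure.disintegrate]

end Coupling

section Cost

variable {S X Y : Type*} [MeasurableSpace S] [MeasurableSpace X] [MeasurableSpace Y]

theorem gwCost_nonneg [PseudoMetricSpace X] [PseudoMetricSpace Y] (π : Measure (X × Y)) :
    0 ≤ gwCost π :=
  integral_nonneg fun _ => integral_nonneg fun _ => sq_nonneg _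

theorem gwSq_le_gwCost [PseudoMetricSpace X] [PseudoMetricSpace Y] {μ : Measure X}
    {ν : Measure Y} {π : Measure (X × Y)} (h : IsCoupling π μ ν) : gwSq μ ν ≤ gwCost π :=
  csInf_le ⟨0, by rintro c ⟨π', -, rfl⟩; exact gwCost_nonneg π'⟩ ⟨π, h, rfl⟩

theorem exists_isCoupling_gwCost_lt [PseudoMetricSpace X] [PseudoMetricSpace Y]
    (μ : Measure X) (ν : Measure Y) [IsProbabilityMeasure μ] [IsProbabilityMeasure ν]
    {δ : ℝ} (hδ : 0 < δ) : ∃ π : Measure (X × Y), IsCoupling π μ ν ∧ gwCost π < gwSq μ ν + δ := by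
  obtain ⟨_, ⟨π, hπ, rfl⟩, hlt⟩ :=
    Real.lt_sInf_add_pos (s := {c | ∃ π, IsCoupling π μ ν ∧ c = gwCost π})
      ⟨_, _, isCoupling_prod, rfl⟩ hδ
  exact ⟨π, hπ, hlt⟩

theorem gwCost_map [PseudoMetricSpace X] [SecondCountableTopology X] [BorelSpace X]
    [PseudoMetricSpace Y] [SecondCountableTopology Y] [BorelSpace Y] (π : Measure S) [SFinite π]
    {T : S → X × Y} (hT : Measurable T) :
    gwCost (π.map T) = ∫ p, ∫ q, (dist (T p).1 (T q).1 - dist (T p).2 (T q).2) ^ 2 ∂π ∂π :=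
  integral_integral_map π hT (by fun_prop : Continuous _).stronglyMeasurable

theorem lgwCost_nonneg [PseudoMetricSpace X] [PseudoMetricSpace Y] (π : Measure (S × X × Y)) :
    0 ≤ lgwCost π :=
  integral_nonneg fun _ => integral_nonneg fun _ => sq_nonneg _

theorem lgwCost_le [PseudoMetricSpace X] [BoundedSpace X] [PseudoMetricSpace Y]
    [BoundedSpace Y] (π : Measure (S × X × Y)) [IsProbabilityMeasure π] :
    lgwCost π ≤ Metric.diam (Set.univ : Set X) ^ 2 + Metric.diam (Set.univ : Set Y) ^ 2 := by
  set B := Metric.diam (Set.univ : Set X) ^ 2 + Metric.diam (Set.univ : Set Y) ^ 2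
  have hbound (p q : S × X × Y) : ‖(dist p.2.1 q.2.1 - dist p.2.2 q.2.2) ^ 2‖ ≤ B := by
    have hx := Metric.dist_le_diam_of_mem (Bornology.isBounded_univ.2 ‹BoundedSpace X›)
      (Set.mem_univ p.2.1) (Set.mem_univ q.2.1)
    have hy := Metric.dist_le_diam_of_mem (Bornology.isBounded_univ.2 ‹BoundedSpace Y›)
      (Set.mem_univ p.2.2) (Set.mem_univ q.2.2)
    rw [Real.norm_of_nonneg (sq_nonneg _)]
    nlinarith [dist_nonneg (x := p.2.1) (y := q.2.1), dist_nonneg (x := p.2.2) (y := q.2.2)]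
  have hinner (p : S × X × Y) : ‖∫ q, (dist p.2.1 q.2.1 - dist p.2.2 q.2.2) ^ 2 ∂π‖ ≤ B := by
    simpa using norm_integral_le_of_norm_le_const (ae_of_all π (hbound p))
  simpa using (Real.le_norm_self (lgwCost π)).trans
    (norm_integral_le_of_norm_le_const (ae_of_all π hinner))

theorem mgwEps_nonneg [PseudoMetricSpace S] [PseudoMetricSpace X] [PseudoMetricSpace Y]
    {ε : ℝ} (hε : 0 ≤ ε) (π : Measure (S × X × Y)) : 0 ≤ mgwEps ε π :=
  integral_nonneg fun _ => integral_nonneg fun _ => by unfold cEps; positivity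

end Cost

section Value

variable {S X Y : Type*} [PseudoMetricSpace S] [MeasurableSpace S] [PseudoMetricSpace X]
  [MeasurableSpace X] [PseudoMetricSpace Y] [MeasurableSpace Y]
  {σ : Measure S} {μ : Measure X} {ν : Measure Y}

theorem mgwVal_le_mgwEps {ε : ℝ} (hε : 0 ≤ ε) {π : Measure (S × X × Y)}
    (hπ : IsTripleCoupling π σ μ ν) : mgwVal σ μ ν ε ≤ mgwEps ε π :=
  csInf_le ⟨0, by rintro c ⟨π', -, rfl⟩; exact mgwEps_nonneg hε π'⟩ ⟨π, hπ, rfl⟩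

theorem le_mgwVal [IsProbabilityMeasure σ] [IsProbabilityMeasure μ] [IsProbabilityMeasure ν]
    {ε b : ℝ} (h : ∀ π, IsTripleCoupling π σ μ ν → b ≤ mgwEps ε π) : b ≤ mgwVal σ μ ν ε :=
  le_csInf ⟨_, _, isTripleCoupling_prod, rfl⟩ fun _ ⟨π, hπ, hc⟩ => hc ▸ h π hπ

end Value

section Compact

variable {S X Y : Type*}
  [MetricSpace S] [CompactSpace S] [MeasurableSpace S] [BorelSpace S]
  [MetricSpace X] [CompactSpace X] [MeasurableSpace X] [BorelSpace X]
  [MetricSpace Y] [CompactSpace Y] [MeasurableSpace Y] [BorelSpace Y]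
  {σ : Measure S} {μ : Measure X} {ν : Measure Y}

theorem mgwEps_eq (ε : ℝ) (π : Measure (S × X × Y)) [IsFiniteMeasure π] :
    mgwEps ε π = ε * lgwCost π + gwCost (π.map fun p => (p.1, p.2.1))
      + gwCost (π.map fun p => (p.1, p.2.2)) := by
  have hint (f : (S × X × Y) × (S × X × Y) → ℝ) (hf : Continuous f) : Integrable f (π.prod π) :=
    hf.integrable_of_hasCompactSupport (.of_compactSpace f)
  rw [gwCost_map π (by fun_prop), gwCost_map π (by fun_prop), lgwCost, mgwEps]
  unfold cEps
  rw [integral_integral_add_uncurry, integral_integral_add_uncurry]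
  · simp only [integral_const_mul]
  all_goals exact hint _ (by fun_prop)

theorem mgwEps_mono {ε₁ ε₂ : ℝ} (h : ε₁ ≤ ε₂) (π : Measure (S × X × Y)) [IsFiniteMeasure π] :
    mgwEps ε₁ π ≤ mgwEps ε₂ π := by
  rw [mgwEps_eq, mgwEps_eq]
  gcongr
  exact lgwCost_nonneg π

theorem gwSq_add_le_mgwEps [IsProbabilityMeasure σ] {ε : ℝ} (hε : 0 ≤ ε)
    {π : Measure (S × X × Y)} (hπ : IsTripleCoupling π σ μ ν) :
    gwSq σ μ + gwSq σ ν ≤ mgwEps ε π := by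
  have := hπ.isProbabilityMeasure
  obtain ⟨hSX, hSY⟩ := isTripleCoupling_iff.1 hπ
  rw [mgwEps_eq]
  nlinarith [gwSq_le_gwCost hSX, gwSq_le_gwCost hSY, mul_nonneg hε (lgwCost_nonneg π)]

variable [IsProbabilityMeasure σ] [IsProbabilityMeasure μ] [IsProbabilityMeasure ν]

theorem mgwVal_mono {ε₁ ε₂ : ℝ} (hε₁ : 0 ≤ ε₁) (h : ε₁ ≤ ε₂) :
    mgwVal σ μ ν ε₁ ≤ mgwVal σ μ ν ε₂ :=
  le_mgwVal fun π hπ =>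
    have := hπ.isProbabilityMeasure
    (mgwVal_le_mgwEps hε₁ hπ).trans (mgwEps_mono h π)

theorem gwSq_add_le_mgwVal {ε : ℝ} (hε : 0 ≤ ε) : gwSq σ μ + gwSq σ ν ≤ mgwVal σ μ ν ε :=
  le_mgwVal fun _ hπ => gwSq_add_le_mgwEps hε hπ

theorem mgwVal_le_gwSq_add {ε : ℝ} (hε : 0 ≤ ε) :
    mgwVal σ μ ν ε ≤ gwSq σ μ + gwSq σ ν
      + ε * (Metric.diam (Set.univ : Set X) ^ 2 + Metric.diam (Set.univ : Set Y) ^ 2) := by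
  refine le_of_forall_pos_lt_add fun δ hδ => ?_
  obtain ⟨π₁, h₁, hc₁⟩ := exists_isCoupling_gwCost_lt σ μ (half_pos hδ)
  obtain ⟨π₂, h₂, hc₂⟩ := exists_isCoupling_gwCost_lt σ ν (half_pos hδ)
  have := h₁.isProbabilityMeasure
  have := h₂.isProbabilityMeasure
  have := nonempty_of_isProbabilityMeasure μ
  have := nonempty_of_isProbabilityMeasure ν
  obtain ⟨π, hπ₁, hπ₂⟩ := exists_map_eq_of_fst_eq π₁ π₂ (h₁.1.trans h₂.1.symm)
  have hπ : IsTripleCoupling π σ μ ν := isTripleCoupling_iff.2 ⟨hπ₁ ▸ h₁, hπ₂ ▸ h₂⟩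
  have := hπ.isProbabilityMeasure
  calc mgwVal σ μ ν ε ≤ mgwEps ε π := mgwVal_le_mgwEps hε hπ
    _ = ε * lgwCost π + gwCost π₁ + gwCost π₂ := by rw [mgwEps_eq, hπ₁, hπ₂]
    _ < _ := by nlinarith [mul_le_mul_of_nonneg_left (lgwCost_le π) hε]

end Compact

/-- `ε ↦ V(ε)` is nondecreasing on `(0,∞)` and
`V(ε) → GW(S,X)² + GW(S,Y)²` as `ε → 0⁺`. -/
theorem mgwVal_monotone_tendsto
    {S X Y : Type*}
    [MetricSpace S] [CompactSpace S] [MeasurableSpace S] [BorelSpace S]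
    [MetricSpace X] [CompactSpace X] [MeasurableSpace X] [BorelSpace X]
    [MetricSpace Y] [CompactSpace Y] [MeasurableSpace Y] [BorelSpace Y]
    (σ : Measure S) (μ : Measure X) (ν : Measure Y)
    [IsProbabilityMeasure σ] [IsProbabilityMeasure μ] [IsProbabilityMeasure ν] :
    (∀ ε₁ ε₂ : ℝ, 0 < ε₁ → ε₁ ≤ ε₂ → mgwVal σ μ ν ε₁ ≤ mgwVal σ μ ν ε₂) ∧
    Tendsto (mgwVal σ μ ν) (𝓝[>] 0) (𝓝 (gwSq σ μ + gwSq σ ν)) := by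
  refine ⟨fun ε₁ ε₂ hε₁ h => mgwVal_mono hε₁.le h, ?_⟩
  set B := Metric.diam (Set.univ : Set X) ^ 2 + Metric.diam (Set.univ : Set Y) ^ 2
  have hupper : Tendsto (fun ε => gwSq σ μ + gwSq σ ν + ε * B) (𝓝[>] 0)
      (𝓝 (gwSq σ μ + gwSq σ ν)) :=
    tendsto_nhdsWithin_of_tendsto_nhds
      ((by fun_prop : Continuous fun ε : ℝ => gwSq σ μ + gwSq σ ν + ε * B).tendsto' 0 _
        (by simp))
  refine tendsto_of_tendsto_of_tendsto_of_le_of_le' tendsto_const_nhds hupper ?_ ?_ <;>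
    filter_upwards [self_mem_nhdsWithin] with ε hε
  exacts [gwSq_add_le_mgwVal (le_of_lt hε), mgwVal_le_gwSq_add (le_of_lt hε)]
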